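/- arXiv:1902.08118 — 4 statements merged into one kernel-verified Lean document; each statement's English description precedes it below -/
import Mathlib

section
/- Every injective holomorphic self-map φ of ℂ \ {0} has the form φ(z) = a·z or φ(z) = a/z for some nonzero complex number a. -/
/-!
Near a puncture an injective holomorphic map omits a whole neighbourhood of some value `φ z₀`
(open mapping theorem), so Riemann's theorem applied to `1 / (φ - φ z₀)` shows that it has no
essential singularity: at `0` and at `∞` it tends either to a finite value or to `∞`. Finite
limits at both ends make `φ` constant by Liouville, infinite limits at both ends do the same for
`1 / φ`. Otherwise, after replacing `φ` by `z ↦ φ (1 / z)` if necessary, `φ` extends to an entire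
function with a pole at `∞`, that is, a polynomial; having no zeros in `ℂ \ {0}` it is `a z ^ k`,
and injectivity forces `k = 1`.
-/

open Filter Topology Metric Set Polynomial Bornology Asymptotics Function

lemma tendsto_comp_inv_nhdsNE_zero_iff {𝕜 α : Type*} [NormedDivisionRing 𝕜] {f : 𝕜 → α}
    {l : Filter α} :
    Tendsto (fun z => f z⁻¹) (𝓝[≠] 0) l ↔ Tendsto f (cobounded 𝕜) l := by
  rw [← inv_nhdsNE_zero, ← Filter.map_inv, tendsto_map'_iff]
  rfl

lemma differentiableOn_update_of_tendsto {E : Type*} [NormedAddCommGroup E] [NormedSpace ℂ E]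
    [CompleteSpace E] {f : ℂ → E} {s : Set ℂ} {c : ℂ} {L : E} (hs : s ∈ 𝓝 c)
    (hd : DifferentiableOn ℂ f (s \ {c})) (h : Tendsto f (𝓝[≠] c) (𝓝 L)) :
    DifferentiableOn ℂ (update f c L) s :=
  (Complex.differentiableOn_compl_singleton_and_continuousAt_iff hs).1
    ⟨hd.congr fun _ hz => update_of_ne hz.2 _ _, continuousAt_update_same.2 h⟩

lemma differentiable_update_of_tendsto {E : Type*} [NormedAddCommGroup E] [NormedSpace ℂ E]
    [CompleteSpace E] {f : ℂ → E} {c : ℂ} {L : E} (hd : DifferentiableOn ℂ f {c}ᶜ)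
    (h : Tendsto f (𝓝[≠] c) (𝓝 L)) : Differentiable ℂ (update f c L) :=
  differentiableOn_univ.1 <|
    differentiableOn_update_of_tendsto univ_mem (by rwa [← compl_eq_univ_sdiff]) h

lemma nhds_le_map_nhds_of_injOn {f : ℂ → ℂ} {s : Set ℂ} {z : ℂ} (hs : s ∈ 𝓝 z)
    (hd : DifferentiableOn ℂ f s) (hinj : InjOn f s) : 𝓝 (f z) ≤ map f (𝓝 z) := by
  refine ((hd.analyticAt hs).eventually_constant_or_nhds_le_map_nhds).resolve_left fun hconst => ?_
  obtain ⟨w, ⟨hfw, hws⟩, hwz⟩ :=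
    (((hconst.and hs).filter_mono nhdsWithin_le_nhds).and (self_mem_nhdsWithin (s := {z}ᶜ))).exists
  exact hwz (hinj hws (mem_of_mem_nhds hs) hfw)

lemma tendsto_nhds_or_cobounded_of_eventually_le_norm_sub {f : ℂ → ℂ} {c w : ℂ} {ε : ℝ}
    (hε : 0 < ε) (hd : ∀ᶠ z in 𝓝[≠] c, DifferentiableAt ℂ f z)
    (hfar : ∀ᶠ z in 𝓝[≠] c, ε ≤ ‖f z - w‖) :
    (∃ L, Tendsto f (𝓝[≠] c) (𝓝 L)) ∨ Tendsto f (𝓝[≠] c) (cobounded ℂ) := by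
  set g : ℂ → ℂ := fun z => (f z - w)⁻¹
  have hne : ∀ᶠ z in 𝓝[≠] c, f z - w ≠ 0 :=
    hfar.mono fun z hz => norm_pos_iff.1 (hε.trans_le hz)
  have hgd : ∀ᶠ z in 𝓝[≠] c, DifferentiableAt ℂ g z :=
    (hd.and hne).mono fun z hz => (hz.1.sub_const w).inv hz.2
  have hgb : IsBoundedUnder (· ≤ ·) (𝓝[≠] c) fun z => ‖g z - g c‖ :=
    isBoundedUnder_of_eventually_le (a := ε⁻¹ + ‖g c‖) <| hfar.mono fun z hz =>
      (norm_sub_le _ _).trans <| by gcongr; simpa [g] using inv_anti₀ hε hz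
  have hg := Complex.tendsto_limUnder_of_differentiable_on_punctured_nhds_of_bounded_under hgd hgb
  have hfg : (fun z => w + (g z)⁻¹) =ᶠ[𝓝[≠] c] f := hne.mono fun z _ => by simp [g]
  by_cases hl : limUnder (𝓝[≠] c) g = 0
  · right
    rw [hl] at hg
    have hg' : Tendsto g (𝓝[≠] c) (𝓝[≠] 0) :=
      tendsto_nhdsWithin_iff.2 ⟨hg, hne.mono fun z hz => inv_ne_zero hz⟩
    exact ((tendsto_const_add_cobounded w).comp (tendsto_inv₀_nhdsNE_zero.comp hg')).congr' hfg
  · exact .inl ⟨_, (tendsto_const_nhds.add (hg.inv₀ hl)).congr' hfg⟩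

lemma tendsto_nhds_or_cobounded_of_injOn {f : ℂ → ℂ} {c : ℂ} {s : Set ℂ} (hs : s ∈ 𝓝[≠] c)
    (hd : DifferentiableOn ℂ f s) (hinj : InjOn f s) :
    (∃ L, Tendsto f (𝓝[≠] c) (𝓝 L)) ∨ Tendsto f (𝓝[≠] c) (cobounded ℂ) := by
  obtain ⟨u, ⟨hcu, hu⟩, hus⟩ := (nhdsWithin_basis_open c {c}ᶜ).mem_iff.1 hs
  set t := u ∩ {c}ᶜ
  have ht : IsOpen t := hu.inter isOpen_compl_singleton
  have htc : t ∈ 𝓝[≠] c := mem_nhdsWithin.2 ⟨u, hu, hcu, subset_rfl⟩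
  obtain ⟨z₀, hz₀⟩ := Filter.nonempty_of_mem htc
  set δ := dist z₀ c / 2 with hδdef
  have hδ : 0 < δ := half_pos (dist_pos.2 hz₀.2)
  have hdt : DifferentiableOn ℂ f t := hd.mono hus
  -- The injective open map `f` sends a neighbourhood of `z₀` onto a neighbourhood of `f z₀`,
  -- which the values of `f` near `c` must avoid.
  obtain ⟨ε, hε, hball⟩ := Metric.mem_nhds_iff.1 <| nhds_le_map_nhds_of_injOn (ht.mem_nhds hz₀)
    hdt (hinj.mono hus) (image_mem_map (inter_mem (ball_mem_nhds z₀ hδ) (ht.mem_nhds hz₀)))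
  refine tendsto_nhds_or_cobounded_of_eventually_le_norm_sub hε (w := f z₀)
    (mem_of_superset htc fun z hz => hdt.differentiableAt (ht.mem_nhds hz))
    (mem_of_superset (inter_mem htc (mem_nhdsWithin_of_mem_nhds (ball_mem_nhds c hδ)))
      fun z ⟨hzt, hzc⟩ => ?_)
  refine le_of_not_gt fun (hlt : ‖f z - f z₀‖ < ε) => ?_
  obtain ⟨y, ⟨hy, hyt⟩, hfy⟩ := hball (mem_ball_iff_norm.2 hlt)
  obtain rfl : y = z := hinj (hus hyt) (hus hzt) hfy
  have := dist_triangle z₀ y c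
  rw [mem_ball, dist_comm] at hy
  rw [mem_ball] at hzc
  linarith

lemma eqOn_const_of_tendsto_nhdsNE_of_tendsto_cobounded {E : Type*} [NormedAddCommGroup E]
    [NormedSpace ℂ E] [CompleteSpace E] {f : ℂ → E} {c : ℂ} {L M : E}
    (hd : DifferentiableOn ℂ f {c}ᶜ) (hc : Tendsto f (𝓝[≠] c) (𝓝 L))
    (hinf : Tendsto f (cobounded ℂ) (𝓝 M)) : EqOn f (fun _ => M) {c}ᶜ := by
  have hF := differentiable_update_of_tendsto hd hc
  have hFinf : Tendsto (update f c L) (cocompact ℂ) (𝓝 M) := by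
    rw [← cobounded_eq_cocompact]
    exact hinf.congr' <| (eventually_ne_cobounded c).mono fun z hz => (update_of_ne hz _ _).symm
  intro z hz
  rw [← update_of_ne hz L f]
  exact hF.apply_eq_of_tendsto_cocompact z hFinf

lemma exists_polynomial_of_isLittleO_pow {f : ℂ → ℂ} (hf : Differentiable ℂ f) {n : ℕ}
    (ho : f =o[cobounded ℂ] (· ^ n)) : ∃ p : ℂ[X], ∀ z, f z = p.eval z := by
  induction n generalizing f with
  | zero =>
    simp only [pow_zero] at ho
    have hf0 : Tendsto f (cocompact ℂ) (𝓝 0) := by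
      rw [← cobounded_eq_cocompact]; exact (isLittleO_one_iff ℂ).1 ho
    exact ⟨0, fun z => by simpa using hf.apply_eq_of_tendsto_cocompact z hf0⟩
  | succ n ih =>
    have hconst : (fun _ => f 0) =o[cobounded ℂ] (· ^ (n + 1)) :=
      isLittleO_const_left.2 <| .inr <|
        tendsto_norm_atTop_iff_cobounded.2 (tendsto_pow_cobounded_cobounded n.succ_ne_zero)
    have hslope : dslope f 0 =o[cobounded ℂ] (· ^ n) := by
      refine ((isBigO_refl (·⁻¹) _).mul_isLittleO (ho.sub hconst)).congr' ?_ ?_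
      · filter_upwards [eventually_ne_cobounded 0] with z hz
        simp [dslope_of_ne _ hz, slope_def_field, div_eq_inv_mul]
      · filter_upwards [eventually_ne_cobounded 0] with z hz
        field_simp
        ring
    obtain ⟨p, hp⟩ := ih (differentiableOn_univ.1 <|
      (Complex.differentiableOn_dslope univ_mem).2 hf.differentiableOn) hslope
    refine ⟨C (f 0) + X * p, fun z => ?_⟩
    have := sub_smul_dslope f 0 z
    simp only [sub_zero, smul_eq_mul] at this
    simp only [eval_add, eval_C, eval_mul, eval_X, ← hp z]
    linear_combination -this

lemma exists_isBigO_pow_of_tendsto_cobounded {f : ℂ → ℂ} (hf : Differentiable ℂ f)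
    (h : Tendsto f (cobounded ℂ) (cobounded ℂ)) : ∃ n : ℕ, f =O[cobounded ℂ] (· ^ n) := by
  -- `w ↦ (f w⁻¹)⁻¹` has a removable zero at `0`, whose order bounds the growth of `f`.
  set g : ℂ → ℂ := fun w => (f w⁻¹)⁻¹
  have hne : ∀ᶠ w in 𝓝[≠] (0 : ℂ), f w⁻¹ ≠ 0 :=
    (tendsto_comp_inv_nhdsNE_zero_iff.2 h).eventually_ne_cobounded 0
  have hg0 : Tendsto g (𝓝[≠] 0) (𝓝 0) :=
    tendsto_inv₀_cobounded.comp (tendsto_comp_inv_nhdsNE_zero_iff.2 h)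
  have hgd : DifferentiableOn ℂ g (insert 0 {w | f w⁻¹ ≠ 0} \ {0}) := fun w ⟨hw, hw0⟩ =>
    ((hf _).comp w (differentiableAt_inv hw0)).inv (hw.resolve_left hw0) |>.differentiableWithinAt
  have hG : AnalyticAt ℂ (update g 0 0) 0 :=
    (differentiableOn_update_of_tendsto (insert_mem_nhds_iff.2 hne) hgd hg0).analyticAt
      (insert_mem_nhds_iff.2 hne)
  have hGne : ¬ ∀ᶠ w in 𝓝 0, update g 0 0 w = 0 := fun hev => by
    obtain ⟨w, ⟨hw, hfw⟩, hw0⟩ :=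
      (((hev.filter_mono nhdsWithin_le_nhds).and hne).and self_mem_nhdsWithin).exists
    rw [update_of_ne hw0] at hw
    exact inv_ne_zero hfw hw
  obtain ⟨n, u, hu, hu0, hGu⟩ := hG.exists_eventuallyEq_pow_smul_nonzero_iff.2 hGne
  have hpow : (fun w : ℂ => w ^ n) =O[𝓝[≠] 0] g := by
    have hu' : (fun w => (u w)⁻¹) =O[𝓝 0] (fun _ => (1 : ℂ)) :=
      (hu.continuousAt.inv₀ hu0).tendsto.isBigO_one ℂ
    refine ((isBigO_refl g _).mul (hu'.mono nhdsWithin_le_nhds)).congr' ?_ (by simp)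
    filter_upwards [self_mem_nhdsWithin, nhdsWithin_le_nhds hGu,
      nhdsWithin_le_nhds (hu.continuousAt.eventually_ne hu0)] with w hw0 hGw huw
    rw [update_of_ne hw0] at hGw
    simp [hGw, huw]
  refine ⟨n, ?_⟩
  simpa [g] using (hpow.comp_tendsto tendsto_inv₀_cobounded').inv_rev <|
    (eventually_ne_cobounded 0).mono fun z hz h => by simp_all

lemma exists_polynomial_of_tendsto_cobounded {f : ℂ → ℂ} (hf : Differentiable ℂ f)
    (h : Tendsto f (cobounded ℂ) (cobounded ℂ)) : ∃ p : ℂ[X], ∀ z, f z = p.eval z := by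
  obtain ⟨n, hn⟩ := exists_isBigO_pow_of_tendsto_cobounded hf h
  refine exists_polynomial_of_isLittleO_pow hf (n := n + 1) (hn.trans_isLittleO ?_)
  have hid : (fun _ => (1 : ℂ)) =o[cobounded ℂ] id :=
    isLittleO_const_left.2 (.inr tendsto_norm_cobounded_atTop)
  simpa [pow_succ] using (isBigO_refl (· ^ n) (cobounded ℂ)).mul_isLittleO hid

lemma Polynomial.eq_C_leadingCoeff_mul_X_pow_of_forall_mem_roots {k : Type*} [Field k]
    [IsAlgClosed k] {p : k[X]} (h : ∀ z ∈ p.roots, z = 0) :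
    p = C p.leadingCoeff * X ^ p.natDegree := by
  have hroots : p.roots = Multiset.replicate p.natDegree 0 :=
    Multiset.eq_replicate.2 ⟨IsAlgClosed.card_roots_eq_natDegree, h⟩
  conv_lhs => rw [← C_leadingCoeff_mul_prod_multiset_X_sub_C (p := p)
    IsAlgClosed.card_roots_eq_natDegree, hroots]
  simp

lemma eq_one_of_injOn_pow {k : ℕ} (h : InjOn (fun z : ℂ => z ^ k) {0}ᶜ) : k = 1 := by
  rcases Nat.lt_trichotomy k 1 with hk | hk | hk
  · obtain rfl : k = 0 := by omega
    exact absurd (h (one_ne_zero (α := ℂ)) two_ne_zero (by simp)) (by norm_num)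
  · exact hk
  · have hζ := Complex.isPrimitiveRoot_exp k (by omega)
    exact absurd (h (hζ.ne_zero (by omega)) one_ne_zero (by simp [hζ.pow_eq_one]))
      (hζ.ne_one hk)

lemma Polynomial.exists_eval_eq_mul_of_injOn {p : ℂ[X]} (hne : ∀ z ≠ 0, p.eval z ≠ 0)
    (hinj : InjOn (fun z => p.eval z) {0}ᶜ) : ∃ a ≠ 0, ∀ z, p.eval z = a * z := by
  have hp := eq_C_leadingCoeff_mul_X_pow_of_forall_mem_roots fun z hz =>
    by_contra fun hz0 => hne z hz0 (mem_roots'.1 hz).2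
  have hk : p.natDegree = 1 := eq_one_of_injOn_pow fun z hz w hw hzw =>
    hinj hz hw (by rw [hp]; simp [hzw])
  refine ⟨p.leadingCoeff, leadingCoeff_ne_zero.2 fun h0 => hne 1 one_ne_zero (by simp [h0]),
    fun z => ?_⟩
  rw [hp, hk]
  simp

lemma exists_eq_mul_of_tendsto_nhdsNE_zero_of_tendsto_cobounded {f : ℂ → ℂ}
    (hd : DifferentiableOn ℂ f {0}ᶜ) (hne : ∀ z ≠ 0, f z ≠ 0) (hinj : InjOn f {0}ᶜ) {L : ℂ}
    (h0 : Tendsto f (𝓝[≠] 0) (𝓝 L)) (hinf : Tendsto f (cobounded ℂ) (cobounded ℂ)) :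
    ∃ a ≠ 0, ∀ z ≠ 0, f z = a * z := by
  obtain ⟨p, hp⟩ := exists_polynomial_of_tendsto_cobounded (differentiable_update_of_tendsto hd h0)
    (hinf.congr' <| (eventually_ne_cobounded 0).mono fun z hz => (update_of_ne hz _ _).symm)
  have hpf : ∀ z ≠ 0, p.eval z = f z := fun z hz => by rw [← hp, update_of_ne hz]
  obtain ⟨a, ha, hpa⟩ := p.exists_eval_eq_mul_of_injOn (fun z hz => hpf z hz ▸ hne z hz)
    (hinj.congr fun z hz => (hpf z hz).symm)
  exact ⟨a, ha, fun z hz => (hpf z hz).symm.trans (hpa z)⟩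

/-- every injective holomorphic self-map of the punctured plane `ℂ \ {0}`
has the form `z ↦ a * z` or `z ↦ a / z` for some `a ≠ 0`. -/
theorem injective_holomorphic_selfmap_punctured_plane
    (φ : ℂ → ℂ)
    (hdiff : DifferentiableOn ℂ φ {0}ᶜ)
    (hmaps : ∀ z : ℂ, z ≠ 0 → φ z ≠ 0)
    (hinj : Set.InjOn φ {0}ᶜ) :
    ∃ a : ℂ, a ≠ 0 ∧ ((∀ z : ℂ, z ≠ 0 → φ z = a * z) ∨ (∀ z : ℂ, z ≠ 0 → φ z = a / z)) := by
  set ψ : ℂ → ℂ := fun z => φ z⁻¹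
  have hinv : MapsTo (·⁻¹ : ℂ → ℂ) {0}ᶜ {0}ᶜ := fun z hz => inv_ne_zero hz
  have hdψ : DifferentiableOn ℂ ψ {0}ᶜ := hdiff.comp (differentiableOn_inv.mono fun _ => id) hinv
  have hiψ : InjOn ψ {0}ᶜ := fun z hz w hw h => inv_injective (hinj (hinv hz) (hinv hw) h)
  have hψ {l} : Tendsto ψ (𝓝[≠] 0) l ↔ Tendsto φ (cobounded ℂ) l :=
    tendsto_comp_inv_nhdsNE_zero_iff
  have hφ {l} : Tendsto φ (𝓝[≠] 0) l ↔ Tendsto ψ (cobounded ℂ) l := by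
    simpa only [ψ, inv_inv] using tendsto_comp_inv_nhdsNE_zero_iff (f := ψ)
  rcases tendsto_nhds_or_cobounded_of_injOn self_mem_nhdsWithin hdiff hinj with ⟨L, hL⟩ | hφ0 <;>
    rcases tendsto_nhds_or_cobounded_of_injOn self_mem_nhdsWithin hdψ hiψ with ⟨M, hM⟩ | hφinf
  · have hconst := eqOn_const_of_tendsto_nhdsNE_of_tendsto_cobounded hdiff hL (hψ.1 hM)
    exact absurd (hinj one_ne_zero two_ne_zero ((hconst one_ne_zero).trans
      (hconst two_ne_zero).symm)) (by norm_num)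
  · obtain ⟨a, ha, h⟩ := exists_eq_mul_of_tendsto_nhdsNE_zero_of_tendsto_cobounded
      hdiff hmaps hinj hL (hψ.1 hφinf)
    exact ⟨a, ha, .inl h⟩
  · obtain ⟨a, ha, h⟩ := exists_eq_mul_of_tendsto_nhdsNE_zero_of_tendsto_cobounded
      hdψ (fun z hz => hmaps _ (hinv hz)) hiψ hM (hφ.1 hφ0)
    exact ⟨a, ha, .inr fun z hz => by simpa [ψ, div_eq_mul_inv] using h z⁻¹ (inv_ne_zero hz)⟩
  · have hconst := eqOn_const_of_tendsto_nhdsNE_of_tendsto_cobounded (hdiff.inv hmaps)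
      (tendsto_inv₀_cobounded.comp hφ0) (tendsto_inv₀_cobounded.comp (hψ.1 hφinf))
    exact absurd (hconst one_ne_zero) (inv_ne_zero (hmaps 1 one_ne_zero))
end

section
/- Let X be a Hausdorff topological space with at least two points and E a vector subspace of C(X) such that the point evaluations {δₓ : x ∈ X} are linearly independent on E. If the weighted composition operator W : E → E, W f = w·(f∘φ), is τ_p-supercyclic, then the symbol φ is injective. -/
/-- The evaluation functional at `x` on a subspace `E` of functions on `X`. -/
noncomputable def evalFunctional {X : Type*} (E : Submodule ℂ (X → ℂ)) (x : X) :
    ↥E →ₗ[ℂ] ℂ :=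
  (LinearMap.proj x).comp E.subtype

/-- The weighted composition map `f ↦ w · (f ∘ φ)` on functions on `X`. -/
def weightedComp {X : Type*} (w : X → ℂ) (φ : X → X) : (X → ℂ) → (X → ℂ) :=
  fun f x => w x * f (φ x)

/-!
Suppose `φ a = φ b` with `a ≠ b`. Then every `W h` satisfies `s · (W h)(a) + t · (W h)(b) = 0`
with `(s, t) = (w b, -w a)`, or `(1, 0)` when `w` vanishes at both points, and independence of
`δ_a, δ_b` makes `L = s δ_a + t δ_b` a nonzero continuous functional. So the projective orbit
`{c Wⁿ f}` lies in the closed set `ker L ∪ ℂ f`; being dense, it forces one of these two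
subspaces to be all of `E`. Neither is: `L ≠ 0`, and `E` carries two independent functionals,
so it is not a line.
-/

theorem Submodule.eq_top_or_eq_top_of_dense_subset_union {R M : Type*} [Ring R] [AddCommGroup M]
    [Module R M] [TopologicalSpace M] {p q : Submodule R M} (hp : IsClosed (p : Set M))
    (hq : IsClosed (q : Set M)) {D : Set M} (hD : Dense D) (hDpq : D ⊆ p ∪ q) :
    p = ⊤ ∨ q = ⊤ := by
  have htop : ((⊤ : Submodule R M) : Set M) ⊆ p ∪ q := by
    simpa [hD.closure_eq] using closure_minimal hDpq (hp.union hq)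
  exact (AddSubgroupClass.subset_union.1 htop).imp top_le_iff.1 top_le_iff.1

theorem Submodule.span_singleton_ne_top_of_linearIndependent_pair {R M : Type*} [CommRing R]
    [Nontrivial R] [AddCommGroup M] [Module R M] {ℓ₁ ℓ₂ : Module.Dual R M}
    (h : LinearIndependent R ![ℓ₁, ℓ₂]) (f : M) : R ∙ f ≠ ⊤ := by
  intro htop
  have hrel : ℓ₂ f • ℓ₁ + (-ℓ₁ f) • ℓ₂ = 0 :=
    LinearMap.ext_on htop (by simp [mul_comm])
  obtain ⟨-, hf₁⟩ := LinearIndependent.pair_iff.1 h _ _ hrel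
  exact h.ne_zero 0 (LinearMap.ext_on htop (by simpa using hf₁))

@[simp]
theorem evalFunctional_apply {X : Type*} (E : Submodule ℂ (X → ℂ)) (x : X) (g : E) :
    evalFunctional E x g = (g : X → ℂ) x :=
  rfl

theorem continuous_evalFunctional {X : Type*} (E : Submodule ℂ (X → ℂ)) (x : X) :
    Continuous (evalFunctional E x) :=
  (continuous_apply x).comp continuous_subtype_val

theorem exists_pair_annihilating_weightedComp {X : Type*} (w : X → ℂ) {φ : X → X} {a b : X}
    (hab : φ a = φ b) :
    ∃ s t : ℂ, ¬(s = 0 ∧ t = 0) ∧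
      ∀ h : X → ℂ, s * weightedComp w φ h a + t * weightedComp w φ h b = 0 := by
  by_cases hw : w a = 0 ∧ w b = 0
  · exact ⟨1, 0, by simp, fun h => by simp [weightedComp, hw.1]⟩
  · refine ⟨w b, -w a, by rwa [neg_eq_zero, and_comm], fun h => ?_⟩
    simp only [weightedComp, hab]
    ring

theorem mem_ker_or_mem_span_of_eq_smul_iterate_weightedComp {X : Type*}
    {E : Submodule ℂ (X → ℂ)} {w : X → ℂ} {φ : X → X} {a b : X} {s t : ℂ}
    (hkill : ∀ h : X → ℂ, s * weightedComp w φ h a + t * weightedComp w φ h b = 0)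
    {f g : E} {c : ℂ} {n : ℕ} (hg : (g : X → ℂ) = c • (weightedComp w φ)^[n] (f : X → ℂ)) :
    g ∈ LinearMap.ker (s • evalFunctional E a + t • evalFunctional E b) ∨ g ∈ ℂ ∙ f := by
  cases n with
  | zero => exact Or.inr (Submodule.mem_span_singleton.2 ⟨c, Subtype.ext (by simpa using hg.symm)⟩)
  | succ n =>
    left
    simp only [LinearMap.mem_ker, LinearMap.add_apply, LinearMap.smul_apply, evalFunctional_apply,
      hg, Function.iterate_succ_apply', Pi.smul_apply, smul_eq_mul]
    linear_combination c * hkill ((weightedComp w φ)^[n] f)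

theorem symbol_injective_of_taup_supercyclic_general
    (X : Type*)
    (E : Submodule ℂ (X → ℂ))
    (hindep : LinearIndependent ℂ (fun x : X => evalFunctional E x))
    (w : X → ℂ) (φ : X → X)
    (hsc : ∃ f : ↥E, Dense {g : ↥E | ∃ (c : ℂ) (n : ℕ),
      (g : X → ℂ) = c • (weightedComp w φ)^[n] (f : X → ℂ)}) :
    Function.Injective φ := by
  obtain ⟨f, hdense⟩ := hsc
  intro a b hab
  by_contra hne
  have hpair : LinearIndependent ℂ ![evalFunctional E a, evalFunctional E b] := by
    have h := hindep.comp ![a, b] (injective_pair_iff_ne.2 hne)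
    rwa [← FinVec.map_eq] at h
  obtain ⟨s, t, hst, hkill⟩ := exists_pair_annihilating_weightedComp w hab
  set L := s • evalFunctional E a + t • evalFunctional E b
  have hL : L ≠ 0 := fun h => hst (LinearIndependent.pair_iff.1 hpair s t h)
  have hLcont : Continuous L :=
    ((continuous_evalFunctional E a).const_smul s).add
      ((continuous_evalFunctional E b).const_smul t)
  rcases Submodule.eq_top_or_eq_top_of_dense_subset_union (isClosed_singleton.preimage hLcont)
      (Submodule.closed_of_finiteDimensional _) hdense
      (fun g ⟨_, _, hg⟩ => mem_ker_or_mem_span_of_eq_smul_iterate_weightedComp hkill hg) with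
    h | h
  · exact hL (LinearMap.ker_eq_top.1 h)
  · exact Submodule.span_singleton_ne_top_of_linearIndependent_pair hpair f h

/-- if `X` is Hausdorff with at least two points, `E ⊆ C(X)` carries the
pointwise topology, the evaluations are linearly independent on `E`, and the weighted
composition operator `W f = w·(f∘φ)` is `τ_p`-supercyclic on `E`, then `φ` is injective. -/
theorem symbol_injective_of_taup_supercyclic
    (X : Type*) [TopologicalSpace X] [T2Space X]
    (hX : ∃ x y : X, x ≠ y)
    (E : Submodule ℂ (X → ℂ))
    (hEcont : ∀ f ∈ E, Continuous f)
    (hindep : LinearIndependent ℂ (fun x : X => evalFunctional E x))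
    (w : X → ℂ) (φ : X → X) (hw : Continuous w) (hφ : Continuous φ)
    (hinv : ∀ f ∈ E, weightedComp w φ f ∈ E)
    (hsc : ∃ f : ↥E, Dense {g : ↥E | ∃ (c : ℂ) (n : ℕ),
      (g : X → ℂ) = c • (weightedComp w φ)^[n] (f : X → ℂ)}) :
    Function.Injective φ :=
  symbol_injective_of_taup_supercyclic_general X E hindep w φ hsc
end

section
/- Let X be a compact Hausdorff space, E a Banach space of continuous functions on X with E ↪ (C(X), ‖·‖_∞) continuous, containing a nowhere vanishing function, and such that all evaluations δₓ, x ∈ X, are linearly independent on E. Then no weighted composition operator W f = w·(f∘φ) on E is weakly supercyclic. -/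
/-- Evaluation at `x ∈ X` as a linear functional on a space `E` continuously
embedded in `C(X)` via `J`. -/
noncomputable def evalViaEmbedding {X : Type*} [TopologicalSpace X]
    {E : Type*} [NormedAddCommGroup E] [NormedSpace ℂ E]
    (J : E →L[ℂ] C(X, ℂ)) (x : X) : E →ₗ[ℂ] ℂ where
  toFun f := (J f) x
  map_add' f g := by simp
  map_smul' c f := by simp

/-!
A weakly dense projective orbit `{c • Tⁿ f}` is mapped by two linearly independent functionals
`L₁, L₂` onto a dense subset of `𝕜²`, so `‖L₂ (Tⁿ f)‖ / ‖L₁ (Tⁿ f)‖` cannot stay bounded.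

If `W` moves a point `x` with `w x ≠ 0`, take `L₁ = δₓ`, `L₂ = δ_{φ x}`. Since
`w x · δ_{φ x} (Wⁿ f) = δₓ (Wⁿ (W f))` and `δₓ (Wⁿ g) = δₓ (Wⁿ f) · (J g / J f) (φⁿ x)`, the
ratio is bounded as soon as `J f` vanishes nowhere. Such a weakly supercyclic `f` exists:
`p(W) f` is again weakly supercyclic whenever `p` has no root at the (at most one) eigenvalue of
the transpose `W'`, so weakly supercyclic vectors are dense, while the nowhere vanishing
functions are the units of `C(X)`, an open set. Otherwise `W` multiplies by `w`, the `δₓ` are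
eigenvectors of `W'`, and `|δ_y (Wⁿ f)| / |δₓ (Wⁿ f)|` is bounded whenever `|w y| ≤ |w x|`.
-/

open Polynomial Module.End

theorem LinearIndependent.pair_of_ne {R M ι : Type*} [Semiring R] [AddCommMonoid M] [Module R M]
    {v : ι → M} (h : LinearIndependent R v) {i j : ι} (hij : i ≠ j) :
    LinearIndependent R ![v i, v j] := by
  have := h.comp ![i, j] (by intro a b; fin_cases a <;> fin_cases b <;> simp [hij, hij.symm])
  convert this using 1
  ext k
  fin_cases k <;> rfl

section WeakSupercyclicity

variable {𝕜 E : Type*} [RCLike 𝕜] [NormedAddCommGroup E] [NormedSpace 𝕜 E]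

theorem WeakSpace.continuous_dual_apply (L : StrongDual 𝕜 E) :
    Continuous fun g : WeakSpace 𝕜 E => L g :=
  WeakBilin.eval_continuous (topDualPairing 𝕜 E).flip L

theorem LinearIndependent.surjective_dual_prod {L₁ L₂ : StrongDual 𝕜 E}
    (h : LinearIndependent 𝕜 ![L₁, L₂]) : Function.Surjective fun v => (L₁ v, L₂ v) := by
  set P : E →ₗ[𝕜] 𝕜 × 𝕜 := (L₁ : E →ₗ[𝕜] 𝕜).prod L₂
  suffices LinearMap.range P = ⊤ from LinearMap.range_eq_top.1 this
  by_contra hP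
  obtain ⟨φ, hφ, hker⟩ := (LinearMap.range P).exists_le_ker_of_lt_top (lt_top_iff_ne_top.2 hP)
  have hrel : φ (1, 0) • L₁ + φ (0, 1) • L₂ = 0 := by
    ext v
    have hv : φ (P v) = 0 := hker ⟨v, rfl⟩
    have hPv : P v = L₁ v • ((1 : 𝕜), (0 : 𝕜)) + L₂ v • ((0 : 𝕜), (1 : 𝕜)) := by simp [P]
    rw [hPv, map_add, map_smul, map_smul] at hv
    simpa [mul_comm] using hv
  obtain ⟨h₁, h₂⟩ := LinearIndependent.pair_iff.1 h _ _ hrel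
  exact hφ (LinearMap.prod_ext (LinearMap.ext_ring h₁) (LinearMap.ext_ring h₂))

theorem Submodule.dense_of_forall_dual_eq_zero {V : Submodule 𝕜 E}
    (h : ∀ L : StrongDual 𝕜 E, (∀ v ∈ V, L v = 0) → L = 0) : Dense (V : Set E) := by
  by_contra hV
  set V' := V.topologicalClosure
  -- makes `E ⧸ V'` a normed space, which has enough continuous functionals
  have : IsClosed (V' : Set E) := V.isClosed_topologicalClosure
  obtain ⟨x, hx⟩ : ∃ x, x ∉ V' := by
    by_contra! hV'
    exact hV (by simpa [Submodule.dense_iff_topologicalClosure_eq_top, Submodule.eq_top_iff'])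
  obtain ⟨L, hL⟩ := SeparatingDual.exists_ne_zero (R := 𝕜) (x := V'.mkQ x) (by simpa using hx)
  have hLV := h (L.comp V'.mkQL) fun v hv => by
    simp [(Submodule.Quotient.mk_eq_zero V').2 (V.le_topologicalClosure hv)]
  exact hL congr($hLV x)

noncomputable def ContinuousLinearMap.transpose (T : E →L[𝕜] E) :
    Module.End 𝕜 (StrongDual 𝕜 E) where
  toFun L := L.comp T
  map_add' _ _ := rfl
  map_smul' _ _ := rfl

@[simp]
theorem ContinuousLinearMap.transpose_apply (T : E →L[𝕜] E) (L : StrongDual 𝕜 E) :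
    T.transpose L = L.comp T :=
  rfl

theorem ContinuousLinearMap.apply_pow_of_hasEigenvector_transpose {T : E →L[𝕜] E} {μ : 𝕜}
    {L : StrongDual 𝕜 E} (h : T.transpose.HasEigenvector μ L) (n : ℕ) (v : E) :
    L ((T ^ n) v) = μ ^ n * L v := by
  induction n generalizing v with
  | zero => simp
  | succ n ih =>
    have hT : L (T v) = μ * L v := congr($(h.apply_eq_smul) v)
    rw [pow_succ, mul_apply_eq_comp, ih, hT, pow_succ, mul_assoc]

theorem ContinuousLinearMap.denseRange_sub_of_not_hasEigenvalue {T : E →L[𝕜] E} {z : 𝕜}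
    (hz : ¬ T.transpose.HasEigenvalue z) : DenseRange (T - algebraMap 𝕜 (E →L[𝕜] E) z) := by
  set S := T - algebraMap 𝕜 (E →L[𝕜] E) z with hS
  have hV : Dense (LinearMap.range (S : E →ₗ[𝕜] E) : Set E) := by
    refine Submodule.dense_of_forall_dual_eq_zero fun L hL => ?_
    by_contra hL0
    refine hz (hasEigenvalue_of_hasEigenvector ⟨mem_eigenspace_iff.2 ?_, hL0⟩)
    ext v
    have hv : L (S v) = 0 := hL _ ⟨v, rfl⟩
    rw [hS, sub_apply, ContinuousLinearMap.algebraMap_apply, map_sub, map_smul, smul_eq_mul,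
      sub_eq_zero] at hv
    simpa using hv
  rwa [LinearMap.coe_range, ContinuousLinearMap.coe_coe] at hV

theorem ContinuousLinearMap.denseRange_aeval [IsAlgClosed 𝕜] {T : E →L[𝕜] E} {p : 𝕜[X]}
    (hp : p ≠ 0) (hroots : ∀ z, p.IsRoot z → ¬ T.transpose.HasEigenvalue z) :
    DenseRange (aeval T p) := by
  have hprod : ∀ s : Multiset 𝕜, (∀ z ∈ s, ¬ T.transpose.HasEigenvalue z) →
      DenseRange (aeval T (s.map fun z => X - C z).prod) := by
    intro s
    induction s using Multiset.induction_on with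
    | empty => simpa using Function.surjective_id.denseRange
    | cons z s ih =>
      intro hs
      rw [Multiset.map_cons, Multiset.prod_cons, map_mul, ContinuousLinearMap.mul_def,
        ContinuousLinearMap.coe_comp, map_sub, aeval_X, aeval_C]
      exact (T.denseRange_sub_of_not_hasEigenvalue (hs z (Multiset.mem_cons_self z s))).comp
        (ih fun y hy => hs y (Multiset.mem_cons_of_mem hy)) (ContinuousLinearMap.continuous _)
  rw [← C_leadingCoeff_mul_prod_multiset_X_sub_C (p := p) IsAlgClosed.card_roots_eq_natDegree,
    map_mul, aeval_C, ContinuousLinearMap.mul_def, ContinuousLinearMap.coe_comp]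
  refine DenseRange.comp ?_ (hprod _ fun z hz => hroots z (isRoot_of_mem_roots hz))
    (ContinuousLinearMap.continuous _)
  refine Function.Surjective.denseRange fun v => ⟨p.leadingCoeff⁻¹ • v, ?_⟩
  simp [smul_smul, inv_mul_cancel₀ (leadingCoeff_ne_zero.2 hp)]

def IsWeaklySupercyclicVector (T : E →L[𝕜] E) (f : E) : Prop :=
  Dense {g : WeakSpace 𝕜 E | ∃ (c : 𝕜) (n : ℕ), g = c • (T ^ n) f}

namespace IsWeaklySupercyclicVector

variable {T : E →L[𝕜] E} {f : E}

theorem eq_zero_of_forall_apply_pow_eq_zero (hf : IsWeaklySupercyclicVector T f)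
    {L : StrongDual 𝕜 E} (hL : ∀ n, L ((T ^ n) f) = 0) : L = 0 := by
  have hclosed : IsClosed {g : WeakSpace 𝕜 E | L g = 0} :=
    isClosed_eq (WeakSpace.continuous_dual_apply L) continuous_const
  have hsub : {g : WeakSpace 𝕜 E | ∃ (c : 𝕜) (n : ℕ), g = c • (T ^ n) f} ⊆ {g | L g = 0} := by
    rintro _ ⟨c, n, rfl⟩
    show L (c • (T ^ n) f) = 0
    rw [map_smul, hL n, smul_zero]
  have huniv := (hf.mono hsub).closure_eq
  rw [hclosed.closure_eq, Set.eq_univ_iff_forall] at huniv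
  exact ContinuousLinearMap.ext huniv

theorem not_forall_norm_le (hf : IsWeaklySupercyclicVector T f) {L₁ L₂ : StrongDual 𝕜 E}
    (hL : LinearIndependent 𝕜 ![L₁, L₂]) (K : ℝ) :
    ¬ ∀ n, ‖L₂ ((T ^ n) f)‖ ≤ K * ‖L₁ ((T ^ n) f)‖ := by
  intro hK
  set P : WeakSpace 𝕜 E → 𝕜 × 𝕜 := fun g => (L₁ g, L₂ g)
  have hP : Continuous P :=
    (WeakSpace.continuous_dual_apply L₁).prodMk (WeakSpace.continuous_dual_apply L₂)
  have hsurj : Function.Surjective P := hL.surjective_dual_prod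
  have hclosed : IsClosed {q : 𝕜 × 𝕜 | ‖q.2‖ ≤ K * ‖q.1‖} :=
    isClosed_le (by fun_prop) (by fun_prop)
  have hsub : P '' {g : WeakSpace 𝕜 E | ∃ (c : 𝕜) (n : ℕ), g = c • (T ^ n) f} ⊆
      {q : 𝕜 × 𝕜 | ‖q.2‖ ≤ K * ‖q.1‖} := by
    rintro _ ⟨_, ⟨c, n, rfl⟩, rfl⟩
    show ‖L₂ (c • (T ^ n) f)‖ ≤ K * ‖L₁ (c • (T ^ n) f)‖
    simp only [map_smul, smul_eq_mul, norm_mul]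
    exact (mul_le_mul_of_nonneg_left (hK n) (norm_nonneg c)).trans_eq (by ring)
  have huniv := ((hsurj.denseRange.dense_image hP hf).mono hsub).closure_eq
  rw [hclosed.closure_eq, Set.eq_univ_iff_forall] at huniv
  have h01 := huniv (0, 1)
  norm_num at h01

theorem apply_ne_zero_of_hasEigenvector (hf : IsWeaklySupercyclicVector T f) {μ : 𝕜}
    {L : StrongDual 𝕜 E} (h : T.transpose.HasEigenvector μ L) : L f ≠ 0 := fun h0 =>
  h.2 (hf.eq_zero_of_forall_apply_pow_eq_zero fun n => by
    rw [T.apply_pow_of_hasEigenvector_transpose h, h0, mul_zero])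

theorem not_linearIndependent_eigenvectors (hf : IsWeaklySupercyclicVector T f) {μ₁ μ₂ : 𝕜}
    {L₁ L₂ : StrongDual 𝕜 E} (h₁ : T.transpose.HasEigenvector μ₁ L₁)
    (h₂ : T.transpose.HasEigenvector μ₂ L₂) : ¬ LinearIndependent 𝕜 ![L₁, L₂] := by
  wlog hμ : ‖μ₂‖ ≤ ‖μ₁‖ generalizing μ₁ μ₂ L₁ L₂
  · rw [LinearIndependent.pair_symm_iff]
    exact this h₂ h₁ (le_of_not_ge hμ)
  intro hL
  have hL₁f := norm_pos_iff.2 (hf.apply_ne_zero_of_hasEigenvector h₁)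
  refine hf.not_forall_norm_le hL (‖L₂ f‖ / ‖L₁ f‖) fun n => ?_
  rw [T.apply_pow_of_hasEigenvector_transpose h₁, T.apply_pow_of_hasEigenvector_transpose h₂,
    norm_mul, norm_mul, norm_pow, norm_pow, div_mul_comm, mul_div_cancel_right₀ _ hL₁f.ne']
  gcongr

theorem eq_of_hasEigenvalue (hf : IsWeaklySupercyclicVector T f) {μ ν : 𝕜}
    (hμ : T.transpose.HasEigenvalue μ) (hν : T.transpose.HasEigenvalue ν) : μ = ν := by
  by_contra hne
  obtain ⟨L₁, h₁⟩ := hμ.exists_hasEigenvector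
  obtain ⟨L₂, h₂⟩ := hν.exists_hasEigenvector
  refine hf.not_linearIndependent_eigenvectors h₁ h₂
    (eigenvectors_linearIndependent' T.transpose ![μ, ν] ?_ ![L₁, L₂] ?_)
  · intro i j hij
    fin_cases i <;> fin_cases j <;> simp_all [eq_comm]
  · intro i
    fin_cases i <;> assumption

theorem map (hf : IsWeaklySupercyclicVector T f) {A : E →L[𝕜] E} (hAT : Commute A T)
    (hA : DenseRange A) : IsWeaklySupercyclicVector T (A f) := by
  have hAw : DenseRange (WeakSpace.map A) := by
    have := (toWeakSpaceCLM_bijective (𝕜 := 𝕜) (E := E)).2.denseRange.comp hA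
      (toWeakSpaceCLM 𝕜 E).continuous
    exact this
  refine (hAw.dense_image (WeakSpace.map A).continuous hf).mono ?_
  rintro _ ⟨_, ⟨c, n, rfl⟩, rfl⟩
  refine ⟨c, n, ?_⟩
  show A (c • (T ^ n) f) = c • (T ^ n) (A f)
  rw [map_smul, ← mul_apply_eq_comp, (hAT.pow_right n).eq, mul_apply_eq_comp]

theorem denseRange_aeval_apply (hf : IsWeaklySupercyclicVector T f) :
    DenseRange fun p : 𝕜[X] => aeval T p f := by
  let P : 𝕜[X] →ₗ[𝕜] E :=
    (ContinuousLinearMap.apply 𝕜 E f).toLinearMap ∘ₗ (aeval T).toLinearMap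
  have hP : Dense (LinearMap.range P : Set E) :=
    Submodule.dense_of_forall_dual_eq_zero fun L hL =>
      hf.eq_zero_of_forall_apply_pow_eq_zero fun n => hL _ ⟨X ^ n, by simp [P]⟩
  rwa [LinearMap.coe_range] at hP

theorem dense_setOf [IsAlgClosed 𝕜] (hf : IsWeaklySupercyclicVector T f) :
    Dense {g | IsWeaklySupercyclicVector T g} := by
  obtain ⟨μ₀, hμ₀⟩ : ∃ μ₀, ∀ μ, T.transpose.HasEigenvalue μ → μ = μ₀ := by
    by_cases h : ∃ μ, T.transpose.HasEigenvalue μ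
    · obtain ⟨μ₀, h₀⟩ := h
      exact ⟨μ₀, fun μ hμ => hf.eq_of_hasEigenvalue hμ h₀⟩
    · exact ⟨0, fun μ hμ => absurd ⟨μ, hμ⟩ h⟩
  refine dense_iff_inter_open.2 fun U hU ⟨u, hu⟩ => ?_
  -- some `p(T) f` lies in `U`; a small shift `p + C δ` keeps it there and makes `p(μ₀) ≠ 0`
  obtain ⟨_, hpU, p, rfl⟩ := hf.denseRange_aeval_apply.inter_open_nonempty U hU ⟨u, hu⟩
  have hδU : IsOpen {δ : 𝕜 | aeval T p f + δ • f ∈ U} := hU.preimage (by fun_prop)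
  obtain ⟨δ, hδ₀, hδ⟩ := (dense_compl_singleton (-p.eval μ₀)).inter_open_nonempty _ hδU
    ⟨0, by simpa using hpU⟩
  have hq : (p + C δ).eval μ₀ ≠ 0 := by
    rw [eval_add, eval_C]
    intro h
    exact hδ (eq_neg_of_add_eq_zero_right h)
  refine ⟨aeval T (p + C δ) f, by simpa using hδ₀, hf.map ?_ ?_⟩
  · simpa using (commute_X (p + C δ)).symm.map (aeval T)
  · exact T.denseRange_aeval (fun h => hq (by simp [h])) fun z hz hμ => hq (hμ₀ z hμ ▸ hz)

end IsWeaklySupercyclicVector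

end WeakSupercyclicity

section WeightedComposition

variable {𝕜 E X : Type*} [RCLike 𝕜] [NormedAddCommGroup E] [NormedSpace 𝕜 E] [TopologicalSpace X]

noncomputable def pointEval (J : E →L[𝕜] C(X, 𝕜)) (x : X) : StrongDual 𝕜 E :=
  (ContinuousMap.evalCLM 𝕜 x).comp J

variable {J : E →L[𝕜] C(X, 𝕜)} {w : X → 𝕜} {φ : X → X} {W : E →L[𝕜] E}

theorem apply_pow_mul_apply_iterate (hW : ∀ g x, J (W g) x = w x * J g (φ x)) (n : ℕ) (f g : E)
    (x : X) : J ((W ^ n) g) x * J f (φ^[n] x) = J ((W ^ n) f) x * J g (φ^[n] x) := by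
  induction n generalizing x with
  | zero => simp [mul_comm]
  | succ n ih =>
    rw [pow_succ', mul_apply_eq_comp, mul_apply_eq_comp, hW, hW, Function.iterate_succ_apply,
      mul_assoc, ih, mul_assoc]

theorem exists_norm_apply_pow_le [CompactSpace X] (hW : ∀ g x, J (W g) x = w x * J g (φ x))
    {f : E} (hf : ∀ x, J f x ≠ 0) (g : E) :
    ∃ K, ∀ n x, ‖J ((W ^ n) g) x‖ ≤ K * ‖J ((W ^ n) f) x‖ := by
  obtain ⟨K, hK⟩ := isCompact_univ.exists_bound_of_continuousOn (f := fun y => J g y / J f y)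
    ((J g).continuous.div (J f).continuous hf).continuousOn
  refine ⟨K, fun n x => ?_⟩
  have hquot : J ((W ^ n) g) x = J ((W ^ n) f) x * (J g (φ^[n] x) / J f (φ^[n] x)) := by
    rw [mul_div_assoc', eq_div_iff (hf _), apply_pow_mul_apply_iterate hW]
  rw [hquot, norm_mul, mul_comm K]
  exact mul_le_mul_of_nonneg_left (hK _ (Set.mem_univ _)) (norm_nonneg _)

theorem not_isWeaklySupercyclicVector_of_linearIndependent [CompactSpace X]
    (hW : ∀ g x, J (W g) x = w x * J g (φ x)) {f : E} (hf : ∀ x, J f x ≠ 0) {x : X}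
    (hJ : LinearIndependent 𝕜 ![pointEval J x, pointEval J (φ x)]) (hwx : w x ≠ 0) :
    ¬ IsWeaklySupercyclicVector W f := by
  intro hfW
  obtain ⟨K, hK⟩ := exists_norm_apply_pow_le hW hf (W f)
  refine hfW.not_forall_norm_le hJ (K / ‖w x‖) fun n => ?_
  have hshift : J ((W ^ n) (W f)) x = w x * J ((W ^ n) f) (φ x) := by
    rw [← mul_apply_eq_comp, ← pow_succ, pow_succ', mul_apply_eq_comp, hW]
  have := hK n x
  rw [hshift, norm_mul] at this
  show ‖J ((W ^ n) f) (φ x)‖ ≤ K / ‖w x‖ * ‖J ((W ^ n) f) x‖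
  rwa [div_mul_eq_mul_div, le_div_iff₀ (norm_pos_iff.2 hwx), mul_comm]

theorem hasEigenvector_transpose_pointEval (hW : ∀ g x, J (W g) x = w x * J g (φ x)) {x : X}
    (hJx : pointEval J x ≠ 0) (hx : φ x = x ∨ w x = 0) :
    W.transpose.HasEigenvector (w x) (pointEval J x) := by
  refine ⟨mem_eigenspace_iff.2 (ContinuousLinearMap.ext fun g => ?_), hJx⟩
  show J (W g) x = w x * J g x
  rcases hx with hx | hx <;> simp [hW, hx]

end WeightedComposition

theorem linearIndependent_pointEval {X E : Type*} [TopologicalSpace X] [NormedAddCommGroup E]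
    [NormedSpace ℂ E] {J : E →L[ℂ] C(X, ℂ)}
    (h : LinearIndependent ℂ fun x : X => evalViaEmbedding J x) :
    LinearIndependent ℂ (pointEval J) :=
  LinearIndependent.of_comp (ContinuousLinearMap.coeLM ℂ) h

theorem weighted_composition_not_weakly_supercyclic_compact_general
    (X : Type*) [TopologicalSpace X] [CompactSpace X]
    (hX : ∃ x y : X, x ≠ y)
    (E : Type*) [NormedAddCommGroup E] [NormedSpace ℂ E]
    (J : E →L[ℂ] C(X, ℂ))
    (hnv : ∃ f : E, ∀ x : X, J f x ≠ 0)
    (hindep : LinearIndependent ℂ (fun x : X => evalViaEmbedding J x))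
    (w : X → ℂ) (φ : X → X)
    (W : E →L[ℂ] E)
    (hW : ∀ (f : E) (x : X), J (W f) x = w x * J f (φ x)) :
    ¬ ∃ f : E, Dense {g : WeakSpace ℂ E | ∃ (c : ℂ) (n : ℕ), g = c • (W ^ n) f} := by
  rintro ⟨f, hf⟩
  replace hf : IsWeaklySupercyclicVector W f := hf
  have hδ := linearIndependent_pointEval hindep
  by_cases hmove : ∃ x, φ x ≠ x ∧ w x ≠ 0
  · obtain ⟨x, hφx, hwx⟩ := hmove
    obtain ⟨g, hgJ, hg⟩ := hf.dense_setOf.inter_open_nonempty _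
      (Units.isOpen.preimage J.continuous)
      (hnv.imp fun h hh => (ContinuousMap.isUnit_iff_forall_ne_zero _).2 hh)
    exact not_isWeaklySupercyclicVector_of_linearIndependent hW
      ((ContinuousMap.isUnit_iff_forall_ne_zero _).1 hgJ) (hδ.pair_of_ne hφx.symm) hwx hg
  · obtain ⟨x, y, hxy⟩ := hX
    have hfix : ∀ z, φ z = z ∨ w z = 0 := fun z => by
      by_contra! hz
      exact hmove ⟨z, hz⟩
    exact hf.not_linearIndependent_eigenvectors
      (hasEigenvector_transpose_pointEval hW (hδ.ne_zero x) (hfix x))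
      (hasEigenvector_transpose_pointEval hW (hδ.ne_zero y) (hfix y)) (hδ.pair_of_ne hxy)

/-- let `X` be a compact Hausdorff space and `E` a Banach space
continuously embedded in `(C(X), ‖·‖_∞)`, containing a nowhere vanishing function and
with all evaluations linearly independent. Then no weighted composition operator
`W f = w·(f∘φ)` on `E` is weakly supercyclic. -/
theorem weighted_composition_not_weakly_supercyclic_compact
    (X : Type*) [TopologicalSpace X] [CompactSpace X] [T2Space X]
    (hX : ∃ x y : X, x ≠ y)
    (E : Type*) [NormedAddCommGroup E] [NormedSpace ℂ E] [CompleteSpace E]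
    (J : E →L[ℂ] C(X, ℂ)) (hJ : Function.Injective J)
    (hnv : ∃ f : E, ∀ x : X, J f x ≠ 0)
    (hindep : LinearIndependent ℂ (fun x : X => evalViaEmbedding J x))
    (w : X → ℂ) (φ : X → X) (hw : Continuous w) (hφ : Continuous φ)
    (W : E →L[ℂ] E)
    (hW : ∀ (f : E) (x : X), J (W f) x = w x * J f (φ x)) :
    ¬ ∃ f : E, Dense {g : WeakSpace ℂ E | ∃ (c : ℂ) (n : ℕ), g = c • (W ^ n) f} :=
  weighted_composition_not_weakly_supercyclic_compact_general X hX E J hnv hindep w φ W hW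
end

section
/- Let E be a locally convex space over ℂ and T : E → E a continuous linear weakly supercyclic operator. If u ∈ E' satisfies T'(u) ≠ u and the sequence (T'ⁿ(u))ₙ converges in the weak-star topology to some v ∈ E', then v = 0. -/
open Filter Topology Set

/-!
Suppose `v ≠ 0`. Passing to the limit in `u ∘ Tⁿ⁺¹ = (u ∘ Tⁿ) ∘ T` gives `v ∘ T = v`, so `u`,
which is not `T'`-invariant, is not a multiple of `v`, and `x ↦ (u x, v x)` maps `E` onto `ℂ²`;
hence the ratio `u / v` takes every value on `{v ≠ 0}`. On the other hand, on the projective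
orbit `ℂ · Tⁿe` of a weakly supercyclic vector this ratio only takes the values
`u (Tⁿe) / v e`, a convergent sequence, so they lie in a compact set `K`. As the ratio is weakly
continuous on the weakly open set `{v ≠ 0}`, density forces it to map all of `{v ≠ 0}` into `K`,
which is absurd since `K ≠ ℂ`.
-/

theorem Function.comp_eq_of_tendsto_comp_iterate {α β : Type*} [TopologicalSpace β] [T2Space β]
    {f : α → α} {u v : α → β} (h : ∀ x, Tendsto (fun n ↦ u (f^[n] x)) atTop (𝓝 (v x))) :
    v ∘ f = v :=
  funext fun x ↦ tendsto_nhds_unique (h (f x)) ((h x).comp (tendsto_add_atTop_nat 1))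

theorem LinearMap.exists_apply_eq_one_and_apply_eq {K V : Type*} [Field K] [AddCommGroup V]
    [Module K V] {u v : V →ₗ[K] K} (hv : v ≠ 0) (huv : ∀ c : K, u ≠ c • v) (r : K) :
    ∃ x, v x = 1 ∧ u x = r := by
  obtain ⟨y, hy⟩ : ∃ y, v y ≠ 0 := by
    by_contra! h
    exact hv (LinearMap.ext h)
  set x₁ := (v y)⁻¹ • y
  have hx₁ : v x₁ = 1 := by simp [x₁, hy]
  obtain ⟨z, hz⟩ : ∃ z, u z - u x₁ * v z ≠ 0 := by
    by_contra! h
    exact huv (u x₁) (LinearMap.ext fun z ↦ by simpa [sub_eq_zero] using h z)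
  -- `z - v z • x₁` lies in `ker v` but not in `ker u`
  refine ⟨x₁ + ((r - u x₁) / (u z - u x₁ * v z)) • (z - v z • x₁), ?_, ?_⟩
  · simp [hx₁]
  · simp only [map_add, map_smul, map_sub, smul_eq_mul]
    field_simp
    ring

theorem LinearMap.ne_smul_of_comp_ne {R V W : Type*} [CommSemiring R] [AddCommMonoid V]
    [Module R V] [AddCommMonoid W] [Module R W] {T : V →ₗ[R] V} {u v : V →ₗ[R] W}
    (hv : v ∘ₗ T = v) (hu : u ∘ₗ T ≠ u) (c : R) : u ≠ c • v := by
  rintro rfl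
  exact hu (by rw [smul_comp, hv])

theorem div_mem_of_dense {X G₀ : Type*} [TopologicalSpace X] [GroupWithZero G₀]
    [TopologicalSpace G₀] [T1Space G₀] [ContinuousInv₀ G₀] [ContinuousMul G₀] {f g : X → G₀}
    (hf : Continuous f) (hg : Continuous g) {s : Set X} (hs : Dense s) {K : Set G₀}
    (hK : IsClosed K)
    (hsK : ∀ x ∈ s, g x ≠ 0 → f x / g x ∈ K) {x : X} (hx : g x ≠ 0) : f x / g x ∈ K := by
  by_contra hxK
  have hopen : IsOpen ({y | g y ≠ 0} ∩ (fun y ↦ f y / g y) ⁻¹' Kᶜ) :=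
    (hf.continuousOn.div hg.continuousOn fun _ hy ↦ hy).isOpen_inter_preimage
      (isOpen_ne.preimage hg) hK.isOpen_compl
  obtain ⟨y, hys, hy0, hyK⟩ := hs.exists_mem_open hopen ⟨x, hx, hxK⟩
  exact hyK (hsK y hys hy0)

theorem weakstar_limit_of_transpose_orbit_is_zero_general
    (E : Type*) [AddCommGroup E] [Module ℂ E] [TopologicalSpace E]
    (T : E →L[ℂ] E)
    (hsc : ∃ e : E, Dense {g : WeakSpace ℂ E | ∃ (c : ℂ) (n : ℕ), g = c • (T ^ n) e})
    (u v : E →L[ℂ] ℂ)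
    (hu : u.comp T ≠ u)
    (hconv : ∀ e : E, Tendsto (fun n : ℕ => u ((T ^ n) e)) atTop (nhds (v e))) :
    v = 0 := by
  obtain ⟨e, hdense⟩ := hsc
  simp only [FunLike.coe_pow_eq_iterate] at hconv
  have hvT : ⇑v ∘ T = v := Function.comp_eq_of_tendsto_comp_iterate hconv
  -- `v e / v e` rather than `1`: it is the limit of the sequence also when `v e = 0`
  set K := insert (v e / v e) (range fun n ↦ u (T^[n] e) / v e)
  have hK : IsCompact K := ((hconv e).div_const _).isCompact_insert_range
  have hratio : ∀ y ∈ {g : WeakSpace ℂ E | ∃ (c : ℂ) (n : ℕ), g = c • (T ^ n) e},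
      v y ≠ 0 → u y / v y ∈ K := by
    rintro _ ⟨c, n, rfl⟩ hy
    have hv_orbit : v (T^[n] e) = v e := congrFun (Function.iterate_invariant hvT n) e
    simp only [map_smul, FunLike.coe_pow_eq_iterate, hv_orbit, smul_eq_mul] at hy ⊢
    rw [mul_div_mul_left _ _ (left_ne_zero_of_mul hy)]
    exact mem_insert_of_mem _ ⟨n, rfl⟩
  obtain ⟨r, hr⟩ := (ne_univ_iff_exists_notMem K).1 hK.ne_univ
  by_contra hv
  obtain ⟨x, hx₁, hxr⟩ := LinearMap.exists_apply_eq_one_and_apply_eq (by exact_mod_cast hv)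
    (LinearMap.ne_smul_of_comp_ne (u := u) (LinearMap.ext (congrFun hvT))
      fun h ↦ hu (ContinuousLinearMap.coe_injective h)) r
  simp only [ContinuousLinearMap.coe_coe] at hx₁ hxr
  have hweak (w : E →L[ℂ] ℂ) : Continuous fun y : WeakSpace ℂ E ↦ w y :=
    WeakBilin.eval_continuous _ w
  have := div_mem_of_dense (hweak u) (hweak v) hdense hK.isClosed hratio (x := x) (by simp [hx₁])
  exact hr (by rwa [hx₁, hxr, div_one] at this)

/-- let `E` be a complex locally convex space and `T` a continuous linear
weakly supercyclic operator on `E`. If `u ∈ E'` is not a fixed point of the transpose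
`T'` and `(T'ⁿ u)ₙ` converges weak-star to some `v ∈ E'`, then `v = 0`. -/
theorem weakstar_limit_of_transpose_orbit_is_zero
    (E : Type*) [AddCommGroup E] [Module ℂ E] [TopologicalSpace E]
    [IsTopologicalAddGroup E] [ContinuousSMul ℂ E]
    [Module ℝ E] [IsScalarTower ℝ ℂ E] [LocallyConvexSpace ℝ E]
    (T : E →L[ℂ] E)
    (hsc : ∃ e : E, Dense {g : WeakSpace ℂ E | ∃ (c : ℂ) (n : ℕ), g = c • (T ^ n) e})
    (u v : E →L[ℂ] ℂ)
    (hu : u.comp T ≠ u)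
    (hconv : ∀ e : E, Tendsto (fun n : ℕ => u ((T ^ n) e)) atTop (nhds (v e))) :
    v = 0 :=
  weakstar_limit_of_transpose_orbit_is_zero_general E T hsc u v hu hconv
end
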